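/- arXiv:2508.18475 — 7 statements merged into one kernel-verified Lean document; each statement's English description precedes it below -/
import Mathlib

section
/- Let 𝒫 = NOP be the Noperthedron. Then for all θ, φ, α ∈ ℝ the following three identities of sets hold: (1) M(θ+2π/15, φ)·𝒫 = M(θ,φ)·𝒫; (2) R(α+π)·M(θ,φ)·𝒫 = R(α)·M(θ,φ)·𝒫; (3) D·M(θ,φ)·𝒫 = M(θ+π/15, π−φ)·𝒫, where D is the 2×2 diagonal matrix diag(1,−1). -/
noncomputable section

open Real

/-- A matrix acting on Euclidean space. -/
def act {m n : ℕ} (A : Matrix (Fin m) (Fin n) ℝ) (v : EuclideanSpace ℝ (Fin n)) :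
    EuclideanSpace ℝ (Fin m) :=
  Matrix.toEuclideanLin A v

def vec3 (a b c : ℝ) : EuclideanSpace ℝ (Fin 3) := (WithLp.equiv 2 (Fin 3 → ℝ)).symm ![a, b, c]

/-- The 2×2 rotation matrix by angle `α`. -/
def R (α : ℝ) : Matrix (Fin 2) (Fin 2) ℝ :=
  !![cos α, -sin α; sin α, cos α]

/-- The orthogonal projection matrix in direction `X θ φ`. -/
def M (θ φ : ℝ) : Matrix (Fin 2) (Fin 3) ℝ :=
  !![-sin θ, cos θ, 0; -cos θ * cos φ, -sin θ * cos φ, sin φ]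

/-- Rotation about the z-axis. -/
def Rz (α : ℝ) : Matrix (Fin 3) (Fin 3) ℝ :=
  !![cos α, -sin α, 0; sin α, cos α, 0; 0, 0, 1]

/-- The group 𝒞₃₀ of symmetries. -/
def C30 : Set (Matrix (Fin 3) (Fin 3) ℝ) :=
  {A | ∃ k : Fin 15, ∃ l : Fin 2, A = (-1 : ℝ) ^ (l : ℕ) • Rz (2 * π * k / 15)}

/-- The orbit of a point under 𝒞₃₀. -/
def orbit (P : EuclideanSpace ℝ (Fin 3)) : Set (EuclideanSpace ℝ (Fin 3)) :=
  {Q | ∃ A ∈ C30, Q = act A P}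

def C1 : EuclideanSpace ℝ (Fin 3) :=
  (259375205 : ℝ)⁻¹ • vec3 152024884 0 210152163

def C2 : EuclideanSpace ℝ (Fin 3) :=
  ((10 : ℝ) ^ 10)⁻¹ • vec3 6632738028 6106948881 3980949609

def C3 : EuclideanSpace ℝ (Fin 3) :=
  ((10 : ℝ) ^ 10)⁻¹ • vec3 8193990033 5298215096 1230614493

/-- The Noperthedron. -/
def NOP : Set (EuclideanSpace ℝ (Fin 3)) := orbit C1 ∪ orbit C2 ∪ orbit C3

/- ### Auxiliary lemmas -/

lemma act_mul {m n p : ℕ} (A : Matrix (Fin m) (Fin n) ℝ) (B : Matrix (Fin n) (Fin p) ℝ)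
    (v : EuclideanSpace ℝ (Fin p)) : act (A * B) v = act A (act B v) := by
  simp [act, Matrix.toEuclideanLin_apply, Matrix.mulVec_mulVec]

lemma act_act {m n p : ℕ} (A : Matrix (Fin m) (Fin n) ℝ) (B : Matrix (Fin n) (Fin p) ℝ)
    (S : Set (EuclideanSpace ℝ (Fin p))) :
    act A '' (act B '' S) = act (A * B) '' S := by
  rw [Set.image_image]
  exact Set.image_congr' (fun x => (act_mul A B x).symm)

lemma Rz_mul (a b : ℝ) : Rz a * Rz b = Rz (a + b) := by
  ext i j
  fin_cases i <;> fin_cases j <;>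
    simp [Rz, Matrix.mul_apply, Fin.sum_univ_three, cos_add, sin_add] <;> ring

lemma Rz_periodic (a : ℝ) : Rz (a + 2 * π) = Rz a := by
  unfold Rz
  rw [cos_add_two_pi, sin_add_two_pi]

lemma Rz_zero : Rz 0 = 1 := by
  ext i j
  fin_cases i <;> fin_cases j <;>
    simp [Rz, Matrix.one_apply, Matrix.vecHead, Matrix.vecTail]

lemma M_mul_Rz (θ φ β : ℝ) : M θ φ * Rz β = M (θ - β) φ := by
  ext i j
  fin_cases i <;> fin_cases j <;>
    simp [M, Rz, Matrix.mul_apply, Fin.sum_univ_three, cos_sub, sin_sub] <;> ring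

lemma R_pi_mul (α θ φ : ℝ) :
    R (α + π) * M θ φ = R α * M θ φ * ((-1 : ℝ) • (1 : Matrix (Fin 3) (Fin 3) ℝ)) := by
  ext i j
  fin_cases i <;> fin_cases j <;>
    simp [R, M, Matrix.mul_apply, Fin.sum_univ_two, Fin.sum_univ_three, cos_add, sin_add,
      Matrix.one_apply] <;> ring

lemma D_mul_M (θ φ β : ℝ) :
    !![(1 : ℝ), 0; 0, -1] * M θ φ * ((-1 : ℝ) • Rz β) = M (θ - β - π) (π - φ) := by
  ext i j
  fin_cases i <;> fin_cases j <;>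
    simp [M, Rz, Matrix.mul_apply, Fin.sum_univ_two, Fin.sum_univ_three, cos_sub, sin_sub,
      cos_add, sin_add, cos_pi, sin_pi] <;> ring

lemma C30_mul_mem {A B : Matrix (Fin 3) (Fin 3) ℝ} (hA : A ∈ C30) (hB : B ∈ C30) :
    A * B ∈ C30 := by
  obtain ⟨k1, l1, rfl⟩ := hA
  obtain ⟨k2, l2, rfl⟩ := hB
  refine ⟨k1 + k2, l1 + l2, ?_⟩
  have hsmul : ((-1 : ℝ) ^ (l1 : ℕ) • Rz (2 * π * k1 / 15)) *
      ((-1 : ℝ) ^ (l2 : ℕ) • Rz (2 * π * k2 / 15))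
      = ((-1 : ℝ) ^ (l1 : ℕ) * (-1) ^ (l2 : ℕ)) • Rz (2 * π * k1 / 15 + 2 * π * k2 / 15) := by
    rw [Matrix.smul_mul, Matrix.mul_smul, smul_smul, Rz_mul]
  rw [hsmul]
  have hl : ((-1 : ℝ) ^ (l1 : ℕ) * (-1) ^ (l2 : ℕ)) = (-1 : ℝ) ^ ((l1 + l2 : Fin 2) : ℕ) := by
    fin_cases l1 <;> fin_cases l2 <;> simp [Fin.add_def]
  have hk : Rz (2 * π * k1 / 15 + 2 * π * k2 / 15) = Rz (2 * π * ((k1 + k2 : Fin 15) : ℕ) / 15) := by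
    have hcase : (k1 : ℕ) + (k2 : ℕ) = ((k1 + k2 : Fin 15) : ℕ) ∨
        (k1 : ℕ) + (k2 : ℕ) = ((k1 + k2 : Fin 15) : ℕ) + 15 := by
      have h1 := k1.isLt; have h2 := k2.isLt
      have h3 : ((k1 + k2 : Fin 15) : ℕ) = ((k1 : ℕ) + (k2 : ℕ)) % 15 := by
        simp [Fin.add_def]
      omega
    rcases hcase with h | h
    · have h' : ((k1 : ℕ) : ℝ) + ((k2 : ℕ) : ℝ) = (((k1 + k2 : Fin 15) : ℕ) : ℝ) := by
        exact_mod_cast congrArg (Nat.cast : ℕ → ℝ) h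
      have harg : 2 * π * (k1 : ℕ) / 15 + 2 * π * (k2 : ℕ) / 15
          = 2 * π * (((k1 + k2 : Fin 15) : ℕ) : ℝ) / 15 := by
        linear_combination (2 * π / 15) * h'
      rw [harg]
    · have h' : ((k1 : ℕ) : ℝ) + ((k2 : ℕ) : ℝ) = (((k1 + k2 : Fin 15) : ℕ) : ℝ) + 15 := by
        exact_mod_cast congrArg (Nat.cast : ℕ → ℝ) h
      have harg : 2 * π * (k1 : ℕ) / 15 + 2 * π * (k2 : ℕ) / 15
          = 2 * π * (((k1 + k2 : Fin 15) : ℕ) : ℝ) / 15 + 2 * π := by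
        linear_combination (2 * π / 15) * h'
      rw [harg, Rz_periodic]
  rw [hl, hk]

lemma act_orbit {A A' : Matrix (Fin 3) (Fin 3) ℝ} (hA : A ∈ C30) (hA' : A' ∈ C30)
    (h : A * A' = 1) (P : EuclideanSpace ℝ (Fin 3)) :
    act A '' orbit P = orbit P := by
  ext Q
  constructor
  · rintro ⟨_, ⟨B, hB, rfl⟩, rfl⟩
    exact ⟨A * B, C30_mul_mem hA hB, (act_mul A B P).symm⟩
  · rintro ⟨B, hB, rfl⟩
    refine ⟨act (A' * B) P, ⟨A' * B, C30_mul_mem hA' hB, rfl⟩, ?_⟩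
    rw [← act_mul, ← mul_assoc, h, one_mul]

lemma act_NOP {A A' : Matrix (Fin 3) (Fin 3) ℝ} (hA : A ∈ C30) (hA' : A' ∈ C30)
    (h : A * A' = 1) : act A '' NOP = NOP := by
  simp only [NOP, Set.image_union, act_orbit hA hA' h]

/-- Symmetries of the projections of the Noperthedron. -/
theorem noperthedron_symmetries (θ φ α : ℝ) :
    act (M (θ + 2 * π / 15) φ) '' NOP = act (M θ φ) '' NOP ∧
    act (R (α + π)) '' (act (M θ φ) '' NOP) = act (R α) '' (act (M θ φ) '' NOP) ∧
    act !![(1 : ℝ), 0; 0, -1] '' (act (M θ φ) '' NOP) =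
      act (M (θ + π / 15) (π - φ)) '' NOP := by
  -- membership facts
  have hv0 : ((0 : Fin 2) : ℕ) = 0 := rfl
  have hv1 : ((1 : Fin 2) : ℕ) = 1 := rfl
  have h1 : Rz (-(2 * π / 15)) ∈ C30 := by
    refine ⟨14, 0, ?_⟩
    have hc : (((14 : Fin 15) : ℕ) : ℝ) = 14 := by
      norm_num [show ((14 : Fin 15) : ℕ) = 14 from rfl]
    have harg : 2 * π * (((14 : Fin 15) : ℕ) : ℝ) / 15 = -(2 * π / 15) + 2 * π := by
      rw [hc]; ring
    rw [hv0, pow_zero, one_smul, harg, Rz_periodic]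
  have h1' : Rz (2 * π / 15) ∈ C30 := by
    refine ⟨1, 0, ?_⟩
    have hc : (((1 : Fin 15) : ℕ) : ℝ) = 1 := by
      norm_num [show ((1 : Fin 15) : ℕ) = 1 from rfl]
    have harg : 2 * π * (((1 : Fin 15) : ℕ) : ℝ) / 15 = 2 * π / 15 := by
      rw [hc]; ring
    rw [hv0, pow_zero, one_smul, harg]
  have hp1 : Rz (-(2 * π / 15)) * Rz (2 * π / 15) = 1 := by
    rw [Rz_mul]
    norm_num [Rz_zero]
  have h2 : ((-1 : ℝ) • (1 : Matrix (Fin 3) (Fin 3) ℝ)) ∈ C30 := by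
    refine ⟨0, 1, ?_⟩
    have hc : (((0 : Fin 15) : ℕ) : ℝ) = 0 := by
      norm_num [show ((0 : Fin 15) : ℕ) = 0 from rfl]
    have harg : 2 * π * (((0 : Fin 15) : ℕ) : ℝ) / 15 = 0 := by rw [hc]; ring
    rw [hv1, pow_one, harg, Rz_zero]
  have hp2 : ((-1 : ℝ) • (1 : Matrix (Fin 3) (Fin 3) ℝ)) *
      ((-1 : ℝ) • (1 : Matrix (Fin 3) (Fin 3) ℝ)) = 1 := by
    rw [Matrix.smul_mul, Matrix.mul_smul, smul_smul]
    norm_num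
  have h3 : ((-1 : ℝ) • Rz (-(16 * π / 15))) ∈ C30 := by
    refine ⟨7, 1, ?_⟩
    have hc : (((7 : Fin 15) : ℕ) : ℝ) = 7 := by
      norm_num [show ((7 : Fin 15) : ℕ) = 7 from rfl]
    have harg : 2 * π * (((7 : Fin 15) : ℕ) : ℝ) / 15 = -(16 * π / 15) + 2 * π := by
      rw [hc]; ring
    rw [hv1, pow_one, harg, Rz_periodic]
  have h3' : ((-1 : ℝ) • Rz (16 * π / 15)) ∈ C30 := by
    refine ⟨8, 1, ?_⟩
    have hc : (((8 : Fin 15) : ℕ) : ℝ) = 8 := by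
      norm_num [show ((8 : Fin 15) : ℕ) = 8 from rfl]
    have harg : 2 * π * (((8 : Fin 15) : ℕ) : ℝ) / 15 = 16 * π / 15 := by
      rw [hc]; ring
    rw [hv1, pow_one, harg]
  have hp3 : ((-1 : ℝ) • Rz (-(16 * π / 15))) * ((-1 : ℝ) • Rz (16 * π / 15)) = 1 := by
    rw [Matrix.smul_mul, Matrix.mul_smul, smul_smul, Rz_mul]
    norm_num [Rz_zero]
  refine ⟨?_, ?_, ?_⟩
  · -- part 1
    have e1 : M (θ + 2 * π / 15) φ = M θ φ * Rz (-(2 * π / 15)) := by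
      rw [M_mul_Rz]
      congr 1
      ring
    rw [e1, ← act_act, act_NOP h1 h1' hp1]
  · -- part 2
    rw [act_act, act_act, R_pi_mul, ← act_act (R α * M θ φ), act_NOP h2 h2 hp2, ← act_act]
  · -- part 3
    have e3 : !![(1 : ℝ), 0; 0, -1] * M θ φ * ((-1 : ℝ) • Rz (-(16 * π / 15)))
        = M (θ + π / 15) (π - φ) := by
      rw [D_mul_M]
      congr 1
      ring
    rw [act_act]
    conv_rhs => rw [← e3, ← act_act, act_NOP h3 h3' hp3]
end
end

section
/- For all a, b ∈ ℝ with |a| ≤ 2 and |b| ≤ 2 the inequality (1 + cos a)(1 + cos b) ≥ 2 + 2·cos(√(a² + b²)) holds, with equality only if a = 0 or b = 0. -/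
/-!
The function `g t = cos √t` is strictly convex on `[0, π²]`: its second derivative is
`(sin u - u cos u) / (4 u³)` with `u = √t`, positive for `0 < u < π`. Since
`cos x cos y = (g ((x + y)²) + g ((x - y)²)) / 2` and `x² + y²` is the midpoint of `(x + y)²` and
`(x - y)²`, Jensen gives `cos √(x² + y²) ≤ cos x cos y`, strictly when `xy ≠ 0`. With `x = a/2`,
`y = b/2` both sides of the theorem are four times the squares of the two sides of this inequality,
which are nonnegative.
-/

open Real Set

lemma sin_sub_mul_cos_pos {u : ℝ} (hu₀ : 0 < u) (huπ : u < π) : 0 < sin u - u * cos u := by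
  rcases lt_or_ge u (π / 2) with hu | hu
  · have hcos : 0 < cos u := cos_pos_of_mem_Ioo ⟨by linarith [pi_pos], hu⟩
    have htan := lt_tan hu₀ hu
    rw [tan_eq_sin_div_cos, lt_div_iff₀ hcos] at htan
    linarith
  · have hcos : cos u ≤ 0 := cos_nonpos_of_pi_div_two_le_of_le hu (by linarith [pi_pos])
    nlinarith [sin_pos_of_pos_of_lt_pi hu₀ huπ]

lemma hasDerivAt_cos_sqrt {t : ℝ} (ht : 0 < t) :
    HasDerivAt (fun s ↦ cos √s) (-sin √t / (2 * √t)) t := by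
  convert (hasDerivAt_sqrt ht.ne').cos using 1
  ring

lemma deriv2_cos_sqrt {t : ℝ} (ht : 0 < t) :
    deriv^[2] (fun s ↦ cos √s) t = (sin √t - √t * cos √t) / (4 * √t ^ 3) := by
  have hderiv : deriv (fun s ↦ cos √s) =ᶠ[nhds t] fun s ↦ -sin √s / (2 * √s) :=
    Filter.eventually_of_mem (isOpen_Ioi.mem_nhds ht) fun s hs ↦ (hasDerivAt_cos_sqrt hs).deriv
  have hsqrt := hasDerivAt_sqrt ht.ne'
  have hpos : 0 < √t := sqrt_pos.mpr ht
  have hderiv' : HasDerivAt (fun s ↦ -sin √s / (2 * √s)) _ t :=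
    hsqrt.sin.neg.fun_div (hsqrt.const_mul 2) (by positivity)
  rw [Function.iterate_succ_apply, Function.iterate_one, hderiv.deriv_eq, hderiv'.deriv,
    Pi.neg_apply]
  field_simp
  ring

theorem strictConvexOn_cos_sqrt : StrictConvexOn ℝ (Icc 0 (π ^ 2)) fun t ↦ cos √t := by
  refine strictConvexOn_of_deriv2_pos (convex_Icc _ _)
    (continuous_cos.comp continuous_sqrt).continuousOn fun t ht ↦ ?_
  rw [interior_Icc] at ht
  have hpos : 0 < √t := sqrt_pos.mpr ht.1
  have hltπ : √t < π := (sqrt_lt' pi_pos).mpr ht.2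
  rw [deriv2_cos_sqrt ht.1]
  exact div_pos (sin_sub_mul_cos_pos hpos hltπ) (by positivity)

lemma cos_mul_cos_eq_average (x y : ℝ) :
    cos x * cos y = (1 / 2 : ℝ) • cos √((x + y) ^ 2) + (1 / 2 : ℝ) • cos √((x - y) ^ 2) := by
  rw [sqrt_sq_eq_abs, sqrt_sq_eq_abs, cos_abs, cos_abs, cos_add, cos_sub, smul_eq_mul, smul_eq_mul]
  ring

lemma sq_add_sq_eq_average (x y : ℝ) :
    x ^ 2 + y ^ 2 = (1 / 2 : ℝ) • (x + y) ^ 2 + (1 / 2 : ℝ) • (x - y) ^ 2 := by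
  simp only [smul_eq_mul]
  ring

lemma add_sq_mem_Icc {x y : ℝ} (hxy : |x| + |y| ≤ π) : (x + y) ^ 2 ∈ Icc 0 (π ^ 2) :=
  ⟨sq_nonneg _, sq_le_sq' (by linarith [neg_abs_le x, neg_abs_le y])
    (by linarith [le_abs_self x, le_abs_self y])⟩

lemma sub_sq_mem_Icc {x y : ℝ} (hxy : |x| + |y| ≤ π) : (x - y) ^ 2 ∈ Icc 0 (π ^ 2) := by
  simpa [sub_eq_add_neg] using add_sq_mem_Icc (y := -y) (by rwa [abs_neg])

theorem cos_sqrt_sq_add_sq_le_cos_mul_cos {x y : ℝ} (hxy : |x| + |y| ≤ π) :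
    cos √(x ^ 2 + y ^ 2) ≤ cos x * cos y := by
  rw [cos_mul_cos_eq_average, sq_add_sq_eq_average]
  exact strictConvexOn_cos_sqrt.convexOn.2 (add_sq_mem_Icc hxy) (sub_sq_mem_Icc hxy)
    (by norm_num) (by norm_num) (by norm_num)

theorem cos_sqrt_sq_add_sq_lt_cos_mul_cos {x y : ℝ} (hxy : |x| + |y| ≤ π) (hx : x ≠ 0)
    (hy : y ≠ 0) : cos √(x ^ 2 + y ^ 2) < cos x * cos y := by
  have hne : (x + y) ^ 2 ≠ (x - y) ^ 2 := fun h ↦ mul_ne_zero hx hy (by linarith)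
  rw [cos_mul_cos_eq_average, sq_add_sq_eq_average]
  exact strictConvexOn_cos_sqrt.2 (add_sq_mem_Icc hxy) (sub_sq_mem_Icc hxy) hne
    (by norm_num) (by norm_num) (by norm_num)

lemma one_add_cos_eq_two_mul_cos_half_sq (x : ℝ) : 1 + cos x = 2 * cos (x / 2) ^ 2 := by
  rw [cos_sq, mul_div_cancel₀ x two_ne_zero]
  ring

/-- A sharp inequality consequence of the convexity of `cos √x` and Jensen's inequality. -/
theorem one_add_cos_mul_one_add_cos (a b : ℝ) (ha : |a| ≤ 2) (hb : |b| ≤ 2) :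
    (1 + cos a) * (1 + cos b) ≥ 2 + 2 * cos (Real.sqrt (a ^ 2 + b ^ 2)) ∧
    ((1 + cos a) * (1 + cos b) = 2 + 2 * cos (Real.sqrt (a ^ 2 + b ^ 2)) → a = 0 ∨ b = 0) := by
  set r := √((a / 2) ^ 2 + (b / 2) ^ 2) with hr_def
  have hab : |a / 2| + |b / 2| ≤ π := by
    rw [abs_div, abs_div, abs_two]
    linarith [pi_gt_three]
  have hr : √(a ^ 2 + b ^ 2) / 2 = r := by
    rw [hr_def, show (a / 2) ^ 2 + (b / 2) ^ 2 = (a ^ 2 + b ^ 2) / 2 ^ 2 by ring,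
      sqrt_div' _ (by positivity), sqrt_sq zero_le_two]
  have hr_nonneg : 0 ≤ cos r := by
    refine cos_nonneg_of_mem_Icc ⟨by linarith [pi_pos, sqrt_nonneg ((a / 2) ^ 2 + (b / 2) ^ 2)], ?_⟩
    rw [sqrt_le_left (by positivity)]
    nlinarith [abs_le.mp ha, abs_le.mp hb, pi_gt_three]
  have hlhs : (1 + cos a) * (1 + cos b) = 4 * (cos (a / 2) * cos (b / 2)) ^ 2 := by
    rw [one_add_cos_eq_two_mul_cos_half_sq a, one_add_cos_eq_two_mul_cos_half_sq b]
    ring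
  have hrhs : 2 + 2 * cos √(a ^ 2 + b ^ 2) = 4 * cos r ^ 2 := by
    linarith [hr ▸ one_add_cos_eq_two_mul_cos_half_sq √(a ^ 2 + b ^ 2)]
  rw [hlhs, hrhs]
  refine ⟨?_, fun heq ↦ ?_⟩
  · have := pow_le_pow_left₀ hr_nonneg (cos_sqrt_sq_add_sq_le_cos_mul_cos hab) 2
    linarith
  · by_contra! h
    have hlt := cos_sqrt_sq_add_sq_lt_cos_mul_cos hab (div_ne_zero h.1 two_ne_zero)
      (div_ne_zero h.2 two_ne_zero)
    have := pow_lt_pow_left₀ hlt hr_nonneg two_ne_zero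
    linarith
end

section
/- For any α, β ∈ ℝ one has ‖R_x(α)·R_y(β) − Id‖ ≤ √(α² + β²), with equality only for α = β = 0. -/
noncomputable section

open Real

/-- Operator norm of a real matrix with respect to the Euclidean norms. -/
def opNorm {m n : ℕ} (A : Matrix (Fin m) (Fin n) ℝ) : ℝ :=
  ‖LinearMap.toContinuousLinearMap (Matrix.toEuclideanLin A)‖

/-- The unit vector parametrized by spherical coordinates. -/
def X (θ φ : ℝ) : EuclideanSpace ℝ (Fin 3) :=
  (WithLp.equiv 2 (Fin 3 → ℝ)).symm ![cos θ * sin φ, sin θ * sin φ, cos φ]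

/-- Rotation about the x-axis. -/
def Rx (α : ℝ) : Matrix (Fin 3) (Fin 3) ℝ :=
  !![1, 0, 0; 0, cos α, -sin α; 0, sin α, cos α]

/-- Rotation about the y-axis. -/
def Ry (α : ℝ) : Matrix (Fin 3) (Fin 3) ℝ :=
  !![cos α, 0, -sin α; 0, 1, 0; sin α, 0, cos α]

/-
Write α = 2a and β = 2b. Then `Rx α * Ry β` is the rotation of the unit quaternion
(cos a, sin a, 0, 0) · (cos b, 0, -sin b, 0), whose vector part is
u = (cos b sin a, -cos a sin b, -sin a sin b), and for every v
  ‖(Rx α * Ry β - 1) v‖² = 4 ‖u‖² ‖v‖² - 4 ⟨u, v⟩²,  ‖u‖² = sin² a + cos² a sin² b.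
Hence ‖Rx α * Ry β - 1‖² ≤ 4 ‖u‖² ≤ 4 sin² a + 4 sin² b ≤ α² + β², and the last step is strict
unless α = β = 0, because sin² x < x² for x ≠ 0.
-/

lemma opNorm_le_of_norm_act_le {m n : ℕ} (A : Matrix (Fin m) (Fin n) ℝ) {C : ℝ} (hC : 0 ≤ C)
    (h : ∀ v, ‖act A v‖ ≤ C * ‖v‖) : opNorm A ≤ C :=
  ContinuousLinearMap.opNorm_le_bound _ hC h

lemma act_Rx_mul_Ry_sub_one (α β : ℝ) (v : EuclideanSpace ℝ (Fin 3)) :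
    act (Rx α * Ry β - 1) v =
      !₂[cos β * v 0 - sin β * v 2 - v 0,
        -(sin α * sin β * v 0) + cos α * v 1 - sin α * cos β * v 2 - v 1,
        cos α * sin β * v 0 + sin α * v 1 + cos α * cos β * v 2 - v 2] := by
  ext i
  fin_cases i <;>
    simp [act, Rx, Ry, Matrix.mulVec, dotProduct, Fin.sum_univ_three, ← sub_eq_add_neg]

lemma norm_act_Rx_mul_Ry_sub_one_sq (a b : ℝ) (v : EuclideanSpace ℝ (Fin 3)) :
    ‖act (Rx (2 * a) * Ry (2 * b) - 1) v‖ ^ 2 =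
      4 * (sin a ^ 2 + cos a ^ 2 * sin b ^ 2) * ‖v‖ ^ 2 -
        4 * (cos b * sin a * v 0 - cos a * sin b * v 1 - sin a * sin b * v 2) ^ 2 := by
  simp only [act_Rx_mul_Ry_sub_one, EuclideanSpace.real_norm_sq_eq, Fin.sum_univ_three,
    Matrix.cons_val_zero, Matrix.cons_val_one, Matrix.cons_val, cos_two_mul', sin_two_mul]
  grind [sin_sq_add_cos_sq]

lemma opNorm_Rx_mul_Ry_sub_one_le (a b : ℝ) :
    opNorm (Rx (2 * a) * Ry (2 * b) - 1) ≤ √(4 * (sin a ^ 2 + cos a ^ 2 * sin b ^ 2)) := by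
  refine opNorm_le_of_norm_act_le _ (sqrt_nonneg _) fun v => ?_
  rw [← sqrt_sq (norm_nonneg (act _ v)), ← sqrt_sq (norm_nonneg v), ← sqrt_mul' _ (sq_nonneg _),
    norm_act_Rx_mul_Ry_sub_one_sq]
  exact sqrt_le_sqrt (sub_le_self _ (by positivity))

lemma sin_sq_add_cos_sq_mul_sin_sq_le (a b : ℝ) :
    sin a ^ 2 + cos a ^ 2 * sin b ^ 2 ≤ a ^ 2 + b ^ 2 := by
  have := mul_le_of_le_one_left (sq_nonneg (sin b)) (cos_sq_le_one a)
  linarith [sin_sq_le_sq (x := a), sin_sq_le_sq (x := b)]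

lemma sin_sq_add_cos_sq_mul_sin_sq_lt {a b : ℝ} (hab : a ≠ 0 ∨ b ≠ 0) :
    sin a ^ 2 + cos a ^ 2 * sin b ^ 2 < a ^ 2 + b ^ 2 := by
  have := mul_le_of_le_one_left (sq_nonneg (sin b)) (cos_sq_le_one a)
  rcases hab with ha | hb
  · linarith [sin_sq_lt_sq ha, sin_sq_le_sq (x := b)]
  · linarith [sin_sq_le_sq (x := a), sin_sq_lt_sq hb]

/-- Bound on the distance between a composition of two rotations and the identity. -/
theorem norm_Rx_mul_Ry_sub_id (α β : ℝ) :
    opNorm (Rx α * Ry β - 1) ≤ Real.sqrt (α ^ 2 + β ^ 2) ∧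
    (opNorm (Rx α * Ry β - 1) = Real.sqrt (α ^ 2 + β ^ 2) → α = 0 ∧ β = 0) := by
  obtain ⟨a, rfl⟩ : ∃ a, α = 2 * a := ⟨α / 2, by ring⟩
  obtain ⟨b, rfl⟩ : ∃ b, β = 2 * b := ⟨β / 2, by ring⟩
  have hnorm := opNorm_Rx_mul_Ry_sub_one_le a b
  rw [show (2 * a) ^ 2 + (2 * b) ^ 2 = 4 * (a ^ 2 + b ^ 2) by ring]
  refine ⟨hnorm.trans (sqrt_le_sqrt (by linarith [sin_sq_add_cos_sq_mul_sin_sq_le a b])), ?_⟩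
  intro heq
  by_contra hab
  have hlt := sin_sq_add_cos_sq_mul_sin_sq_lt (a := a) (b := b) (by contrapose! hab; simp [hab])
  exact (hnorm.trans_lt (sqrt_lt_sqrt (by positivity) (by linarith))).ne heq
end
end

section
/- Let P ∈ ℝ³ with ‖P‖ ≤ 1, let ε > 0 and r > 0, and let θ̄, φ̄, θ, φ ∈ ℝ with |θ̄ − θ| ≤ ε and |φ̄ − φ| ≤ ε. If ‖M(θ̄,φ̄)·P‖ > r + √2·ε, then ‖M(θ,φ)·P‖ > r. -/
noncomputable section

open Real

/-!
Move the angles at constant velocity `(Δθ, Δφ)` from `(θ, φ)` to `(θ', φ')`. The point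
`M(θ, φ) P` then has speed at most `√(Δθ² + Δφ²) ‖P‖ ≤ √2 ε`, so by the mean value inequality it
moves by at most `√2 ε`, and the reverse triangle inequality concludes.
-/

lemma act_apply {m n : ℕ} (A : Matrix (Fin m) (Fin n) ℝ) (v : EuclideanSpace ℝ (Fin n))
    (i : Fin m) : act A v i = ∑ j, A i j * v j := by
  simp [act, Matrix.mulVec, dotProduct]

lemma hasDerivAt_act {m n : ℕ} {A : ℝ → Matrix (Fin m) (Fin n) ℝ}
    {A' : Matrix (Fin m) (Fin n) ℝ} {t : ℝ} (hA : ∀ i j, HasDerivAt (fun t ↦ A t i j) (A' i j) t)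
    (v : EuclideanSpace ℝ (Fin n)) : HasDerivAt (fun t ↦ act (A t) v) (act A' v) t := by
  have hcoord : HasDerivAt (fun t ↦ (act (A t) v).ofLp) (act A' v).ofLp t :=
    hasDerivAt_pi.2 fun i ↦ by
      simp only [act_apply]
      exact HasDerivAt.fun_sum fun j _ ↦ (hA i j).mul_const (v j)
  exact (PiLp.hasFDerivAt_toLp 2 _).comp_hasDerivAt t hcoord

def dM (θ φ a b : ℝ) : Matrix (Fin 2) (Fin 3) ℝ :=
  !![-a * cos θ, -a * sin θ, 0;
    a * sin θ * cos φ + b * cos θ * sin φ, -a * cos θ * cos φ + b * sin θ * sin φ, b * cos φ]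

lemma hasDerivAt_M_apply {θ φ : ℝ → ℝ} {a b t : ℝ} (hθ : HasDerivAt θ a t)
    (hφ : HasDerivAt φ b t) (i : Fin 2) (j : Fin 3) :
    HasDerivAt (fun t ↦ M (θ t) (φ t) i j) (dM (θ t) (φ t) a b i j) t := by
  fin_cases i <;> fin_cases j <;> simp only [M, dM, neg_mul, Fin.zero_eta,
    Fin.isValue, Fin.mk_one, Fin.reduceFinMk, Matrix.of_apply, Matrix.cons_val', Matrix.cons_val,
    Matrix.cons_val_zero, Matrix.cons_val_one, Matrix.cons_val_fin_one]
  · exact (hθ.sin.neg).congr_deriv (by ring)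
  · exact hθ.cos.congr_deriv (by ring)
  · exact hasDerivAt_const t 0
  · exact (hθ.cos.mul hφ.cos).neg.congr_deriv (by ring)
  · exact (hθ.sin.mul hφ.cos).neg.congr_deriv (by ring)
  · exact hφ.sin.congr_deriv (by ring)

lemma norm_act_dM_le (θ φ a b : ℝ) (P : EuclideanSpace ℝ (Fin 3)) :
    ‖act (dM θ φ a b) P‖ ≤ √(a ^ 2 + b ^ 2) * ‖P‖ := by
  have hsq : ‖act (dM θ φ a b) P‖ ^ 2 ≤ (a ^ 2 + b ^ 2) * ‖P‖ ^ 2 := by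
    simp only [EuclideanSpace.norm_sq_eq, Real.norm_eq_abs, sq_abs, Fin.sum_univ_two,
      Fin.sum_univ_three, act_apply, dM, neg_mul, Fin.isValue, Matrix.of_apply, Matrix.cons_val',
      Matrix.cons_val_zero, Matrix.cons_val_fin_one, Matrix.cons_val_one, Matrix.cons_val, zero_mul,
      add_zero]
    -- the slack is the sum of these two squares, modulo `sin ^ 2 + cos ^ 2 = 1`
    linear_combination
      sq_nonneg (b * cos φ * (cos θ * P 0 + sin θ * P 1) + a * sin φ * (-sin θ * P 0 + cos θ * P 1)
        - b * sin φ * P 2) +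
      sq_nonneg (b * (-sin θ * P 0 + cos θ * P 1) + a * P 2) +
      ((a * (-sin θ * P 0 + cos θ * P 1) - b * P 2) ^ 2 + b ^ 2 * (cos θ * P 0 + sin θ * P 1) ^ 2) *
        sin_sq_add_cos_sq φ +
      (a ^ 2 + b ^ 2) * (P 0 ^ 2 + P 1 ^ 2) * sin_sq_add_cos_sq θ
  rw [← Real.sqrt_sq (norm_nonneg (act _ P)), ← Real.sqrt_sq (norm_nonneg P),
    ← Real.sqrt_mul (by positivity)]
  exact Real.sqrt_le_sqrt hsq

lemma norm_act_M_sub_act_M_le (P : EuclideanSpace ℝ (Fin 3)) (θ φ θ' φ' : ℝ) :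
    ‖act (M θ' φ') P - act (M θ φ) P‖ ≤ √((θ' - θ) ^ 2 + (φ' - φ) ^ 2) * ‖P‖ := by
  have hγ (t : ℝ) : HasDerivAt (fun t ↦ act (M (θ + t * (θ' - θ)) (φ + t * (φ' - φ))) P)
      (act (dM (θ + t * (θ' - θ)) (φ + t * (φ' - φ)) (θ' - θ) (φ' - φ)) P) t :=
    hasDerivAt_act (hasDerivAt_M_apply ((hasDerivAt_mul_const _).const_add θ)
      ((hasDerivAt_mul_const _).const_add φ)) P
  simpa using norm_image_sub_le_of_norm_deriv_le_segment_01'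
    (fun t _ ↦ (hγ t).hasDerivWithinAt) (fun t _ ↦ norm_act_dM_le _ _ _ _ P)

lemma sqrt_sq_add_sq_le_sqrt_two_mul {x y ε : ℝ} (hx : |x| ≤ ε) (hy : |y| ≤ ε) :
    √(x ^ 2 + y ^ 2) ≤ √2 * ε := by
  have hε : 0 ≤ ε := (abs_nonneg x).trans hx
  rw [Real.sqrt_le_iff, mul_pow, Real.sq_sqrt zero_le_two]
  refine ⟨by positivity, ?_⟩
  linarith [sq_le_sq' (abs_le.1 hx).1 (abs_le.1 hx).2, sq_le_sq' (abs_le.1 hy).1 (abs_le.1 hy).2]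

theorem norm_M_mulVec_gt_general (P : EuclideanSpace ℝ (Fin 3)) (hP : ‖P‖ ≤ 1)
    (ε r θ' φ' θ φ : ℝ) (hθ : |θ' - θ| ≤ ε) (hφ : |φ' - φ| ≤ ε)
    (h : ‖act (M θ' φ') P‖ > r + Real.sqrt 2 * ε) :
    ‖act (M θ φ) P‖ > r := by
  have hclose : ‖act (M θ' φ') P - act (M θ φ) P‖ ≤ √2 * ε :=
    calc ‖act (M θ' φ') P - act (M θ φ) P‖
        ≤ √((θ' - θ) ^ 2 + (φ' - φ) ^ 2) * ‖P‖ := norm_act_M_sub_act_M_le P θ φ θ' φ'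
      _ ≤ √((θ' - θ) ^ 2 + (φ' - φ) ^ 2) := mul_le_of_le_one_right (Real.sqrt_nonneg _) hP
      _ ≤ √2 * ε := sqrt_sq_add_sq_le_sqrt_two_mul hθ hφ
  linarith [norm_sub_norm_le (act (M θ' φ') P) (act (M θ φ) P)]

/-- A lower bound on the norm of the projection is stable under perturbation of the angles. -/
theorem norm_M_mulVec_gt (P : EuclideanSpace ℝ (Fin 3)) (hP : ‖P‖ ≤ 1)
    (ε r θ' φ' θ φ : ℝ) (hε : 0 < ε) (hr : 0 < r) (hθ : |θ' - θ| ≤ ε) (hφ : |φ' - φ| ≤ ε)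
    (h : ‖act (M θ' φ') P‖ > r + Real.sqrt 2 * ε) :
    ‖act (M θ φ) P‖ > r :=
  norm_M_mulVec_gt_general P hP ε r θ' φ' θ φ hθ hφ h
end
end

section
/- Let ε > 0 and let θ, θ̄, φ, φ̄, α, ᾱ ∈ ℝ with |θ − θ̄| ≤ ε, |φ − φ̄| ≤ ε and |α − ᾱ| ≤ ε. Then ‖R(α)·M(θ,φ) − R(ᾱ)·M(θ̄,φ̄)‖ < √5·ε. -/
set_option maxHeartbeats 1000000

noncomputable section

open Real

lemma cs3' (p0 p1 p2 v0 v1 v2 : ℝ) :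
    (p0*v0+p1*v1+p2*v2)^2 ≤ (p0^2+p1^2+p2^2)*(v0^2+v1^2+v2^2) := by
  nlinarith [sq_nonneg (p0*v1-p1*v0), sq_nonneg (p0*v2-p2*v0), sq_nonneg (p1*v2-p2*v1)]

lemma opNorm_le_of_quad (A : Matrix (Fin 2) (Fin 3) ℝ) {c : ℝ} (hc : 0 ≤ c)
    (h : ∀ x z : ℝ, (A 0 0*x + A 1 0*z)^2 + (A 0 1*x + A 1 1*z)^2 + (A 0 2*x + A 1 2*z)^2
      ≤ c^2*(x^2+z^2)) :
    opNorm A ≤ c := by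
  rw [opNorm]
  refine ContinuousLinearMap.opNorm_le_bound _ hc fun v => ?_
  have hcomp : ∀ i, Matrix.toEuclideanLin A v i = ∑ j, A i j * v j := fun i => by
    simp [Matrix.toEuclideanLin, Matrix.toLin'_apply, Matrix.mulVec, dotProduct]
  have hn1 : ‖(LinearMap.toContinuousLinearMap (Matrix.toEuclideanLin A)) v‖
      = Real.sqrt ((∑ j, A 0 j * v j)^2 + (∑ j, A 1 j * v j)^2) := by
    rw [LinearMap.coe_toContinuousLinearMap']
    rw [EuclideanSpace.norm_eq]
    rw [Fin.sum_univ_two, hcomp 0, hcomp 1]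
    simp [sq_abs]
  have hn2 : ‖v‖ = Real.sqrt ((v 0)^2 + (v 1)^2 + (v 2)^2) := by
    rw [EuclideanSpace.norm_eq, Fin.sum_univ_three]
    simp [sq_abs]
  rw [hn1, hn2]
  set v0 := v 0; set v1 := v 1; set v2 := v 2
  have e0 : (∑ j, A 0 j * v j) = A 0 0 * v0 + A 0 1 * v1 + A 0 2 * v2 := by
    rw [Fin.sum_univ_three]
  have e1 : (∑ j, A 1 j * v j) = A 1 0 * v0 + A 1 1 * v1 + A 1 2 * v2 := by
    rw [Fin.sum_univ_three]
  rw [e0, e1]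
  set w0 := A 0 0 * v0 + A 0 1 * v1 + A 0 2 * v2 with hw0
  set w1 := A 1 0 * v0 + A 1 1 * v1 + A 1 2 * v2 with hw1
  have key := h w0 w1
  have csq := cs3' (A 0 0*w0 + A 1 0*w1) (A 0 1*w0 + A 1 1*w1) (A 0 2*w0 + A 1 2*w1) v0 v1 v2
  have idq : (A 0 0*w0 + A 1 0*w1)*v0 + (A 0 1*w0 + A 1 1*w1)*v1 + (A 0 2*w0 + A 1 2*w1)*v2
      = w0^2 + w1^2 := by rw [hw0, hw1]; ring
  rw [idq] at csq
  have hV : (0:ℝ) ≤ v0^2+v1^2+v2^2 := by positivity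
  have main : w0^2 + w1^2 ≤ c^2 * (v0^2+v1^2+v2^2) := by
    rcases (show (0:ℝ) ≤ w0^2+w1^2 by positivity).lt_or_eq with hN | hN
    · have h1 : (w0^2+w1^2)^2 ≤ (c^2*(w0^2+w1^2))*(v0^2+v1^2+v2^2) :=
        le_trans csq (mul_le_mul_of_nonneg_right key hV)
      have h2 : (w0^2+w1^2) * (w0^2+w1^2) ≤ (c^2 * (v0^2+v1^2+v2^2)) * (w0^2+w1^2) := by
        calc (w0^2+w1^2) * (w0^2+w1^2) = (w0^2+w1^2)^2 := by ring
          _ ≤ (c^2*(w0^2+w1^2))*(v0^2+v1^2+v2^2) := h1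
          _ = (c^2 * (v0^2+v1^2+v2^2)) * (w0^2+w1^2) := by ring
      exact le_of_mul_le_mul_right h2 hN
    · rw [← hN]; positivity
  calc Real.sqrt (w0^2+w1^2) ≤ Real.sqrt (c^2*(v0^2+v1^2+v2^2)) := Real.sqrt_le_sqrt main
    _ = c * Real.sqrt (v0^2+v1^2+v2^2) := by
        rw [Real.sqrt_mul (sq_nonneg c), Real.sqrt_sq hc]

lemma rowsum (ca sa ct st c s x z : ℝ)
    (pa : sa^2+ca^2 = 1) (pt : st^2+ct^2 = 1) (pf : s^2+c^2 = 1) :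
    ((ca*(-st) - sa*(-(ct*c)))*x + (sa*(-st) + ca*(-(ct*c)))*z)^2 + ((ca*ct - sa*(-(st*c)))*x + (sa*ct + ca*(-(st*c)))*z)^2 + ((ca*0 - sa*s)*x + (sa*0 + ca*s)*z)^2 = x^2+z^2 := by
  linear_combination ((1)*s^2*x^2 + (1)*st^2*z^2 + (1)*st^2*c^2*x^2 + (1)*ct^2*z^2 + (1)*ct^2*c^2*x^2)*pa + ((1)*z^2 + (1)*c^2*x^2 + (2)*ca*sa*x*z + (-2)*ca*sa*c^2*x*z + (-1)*ca^2*z^2 + (1)*ca^2*x^2 + (1)*ca^2*c^2*z^2 + (-1)*ca^2*c^2*x^2)*pt + ((1)*x^2 + (-2)*ca*sa*x*z + (1)*ca^2*z^2 + (-1)*ca^2*x^2)*pf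

lemma keyid (ca sa cb sb ct st cu su c s c' s' x z : ℝ)
    (pa : sa^2+ca^2 = 1) (pb : sb^2+cb^2 = 1) (pt : st^2+ct^2 = 1)
    (pu : su^2+cu^2 = 1) (pf : s^2+c^2 = 1) (pg : s'^2+c'^2 = 1) :
    (((ca*(-st) - sa*(-(ct*c))) - (cb*(-su) - sb*(-(cu*c'))))*x + ((sa*(-st) + ca*(-(ct*c))) - (sb*(-su) + cb*(-(cu*c'))))*z)^2 + (((ca*ct - sa*(-(st*c))) - (cb*cu - sb*(-(su*c'))))*x + ((sa*ct + ca*(-(st*c))) - (sb*cu + cb*(-(su*c'))))*z)^2 + (((ca*0 - sa*s) - (cb*0 - sb*s'))*x + ((sa*0 + ca*s) - (sb*0 + cb*s'))*z)^2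
    = (2 - 2*(ca*cb+sa*sb)*(ct*cu+st*su) + (ca*cb+sa*sb)*((ct*cu+st*su)*(1-(c*c'+s*s')) - (1-(ct*cu+st*su))*(s*s')) - (sa*cb-ca*sb)*(st*cu-ct*su)*(c+c'))*(x^2+z^2) - 2*(((ca*cb-sa*sb)*(((ct*cu+st*su)*(1-(c*c'+s*s')) - (1-(ct*cu+st*su))*(s*s'))/2) - (sa*cb+ca*sb)*(((st*cu-ct*su)*(c'-c))/2))*(x^2-z^2) + 2*((ca*cb-sa*sb)*(((st*cu-ct*su)*(c'-c))/2) + (sa*cb+ca*sb)*(((ct*cu+st*su)*(1-(c*c'+s*s')) - (1-(ct*cu+st*su))*(s*s'))/2))*x*z) := by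
  linear_combination ((1)*s^2*x^2 + (1)*st^2*z^2 + (1)*st^2*c^2*x^2 + (1)*ct^2*z^2 + (1)*ct^2*c^2*x^2)*pa + ((1)*s'^2*x^2 + (1)*su^2*z^2 + (1)*su^2*c'^2*x^2 + (1)*cu^2*z^2 + (1)*cu^2*c'^2*x^2)*pb + ((1)*z^2 + (1)*c^2*x^2 + (2)*ca*sa*x*z + (-2)*ca*sa*c^2*x*z + (-1)*ca^2*z^2 + (1)*ca^2*x^2 + (1)*ca^2*c^2*z^2 + (-1)*ca^2*c^2*x^2)*pt + ((1)*z^2 + (1)*c'^2*x^2 + (2)*cb*sb*x*z + (-2)*cb*sb*c'^2*x*z + (-1)*cb^2*z^2 + (1)*cb^2*x^2 + (1)*cb^2*c'^2*z^2 + (-1)*cb^2*c'^2*x^2)*pu + ((1)*x^2 + (-2)*ca*sa*x*z + (1)*ca^2*z^2 + (-1)*ca^2*x^2)*pf + ((1)*x^2 + (-2)*cb*sb*x*z + (1)*cb^2*z^2 + (-1)*cb^2*x^2)*pg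

lemma quadbound (cda sda cdt sdt csg ssg c s c' s' : ℝ)
    (hsg : ssg^2+csg^2 = 1) (x z : ℝ) :
    (2 - 2*cda*cdt + cda*(cdt*(1-(c*c'+s*s')) - (1-cdt)*(s*s')) - sda*sdt*(c+c'))*(x^2+z^2) - 2*((csg*((cdt*(1-(c*c'+s*s')) - (1-cdt)*(s*s'))/2) - ssg*((sdt*(c'-c))/2))*(x^2-z^2) + 2*(csg*((sdt*(c'-c))/2) + ssg*((cdt*(1-(c*c'+s*s')) - (1-cdt)*(s*s'))/2))*x*z)
    ≤ ((2 - 2*cda*cdt + cda*(cdt*(1-(c*c'+s*s')) - (1-cdt)*(s*s')) - sda*sdt*(c+c')) + Real.sqrt ((cdt*(1-(c*c'+s*s')) - (1-cdt)*(s*s'))^2 + sdt^2*(c-c')^2))*(x^2+z^2) := by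
  set Z := (cdt*(1-(c*c'+s*s')) - (1-cdt)*(s*s')) with hZ
  set K0 := (csg*((cdt*(1-(c*c'+s*s')) - (1-cdt)*(s*s'))/2) - ssg*((sdt*(c'-c))/2)) with hK0
  set K1 := (csg*((sdt*(c'-c))/2) + ssg*((cdt*(1-(c*c'+s*s')) - (1-cdt)*(s*s'))/2)) with hK1
  have hZP : (0:ℝ) ≤ Z^2 + sdt^2*(c-c')^2 := by positivity
  have ht0 : (0:ℝ) ≤ Real.sqrt (Z^2 + sdt^2*(c-c')^2) := Real.sqrt_nonneg _
  have htsq : (Real.sqrt (Z^2 + sdt^2*(c-c')^2))^2 = Z^2 + sdt^2*(c-c')^2 := Real.sq_sqrt hZP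
  have hKK : 4*(K0^2 + K1^2) = Z^2 + sdt^2*(c-c')^2 := by
    rw [hK0, hK1]
    linear_combination (Z^2+(sdt*(c'-c))^2)*hsg
  have hCS : (2*(K0*(x^2-z^2) + 2*K1*x*z))^2 ≤ (4*(K0^2+K1^2))*((x^2+z^2)^2) := by
    nlinarith [sq_nonneg (K1*(x^2-z^2) - 2*K0*x*z)]
  have key : -(2*(K0*(x^2-z^2)+2*K1*x*z)) ≤ Real.sqrt (Z^2 + sdt^2*(c-c')^2)*(x^2+z^2) := by
    have h1 : (Real.sqrt (Z^2 + sdt^2*(c-c')^2)*(x^2+z^2))^2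
        = (4*(K0^2+K1^2))*((x^2+z^2)^2) := by
      rw [mul_pow, htsq, hKK]
    nlinarith [hCS, h1, mul_nonneg ht0 (by positivity : (0:ℝ) ≤ x^2+z^2)]
  nlinarith [key]


lemma claimE (c s c' s' : ℝ) (pf : s^2+c^2 = 1) (pg : s'^2+c'^2 = 1) :
    (c-c')^2 ≤ 2*(1-(c*c'+s*s'))*(1-c*c') := by
  have hidA : 2*(1-(c*c'+s*s'))*(1-c*c') - (c-c')^2
      = (s-s')^2*(1-c*c') - (c*c')*(c-c')^2 := by
    linear_combination ((-1) + (1)*c*c')*pf + ((-1) + (1)*c*c')*pg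
  rcases le_or_gt (c*c') 0 with hcp | hcp
  · have h1cc : (0:ℝ) ≤ 1 - c*c' := by linarith
    nlinarith [mul_nonneg (sq_nonneg (s-s')) h1cc,
      mul_nonneg (neg_nonneg.2 hcp) (sq_nonneg (c-c'))]
  · have hpos : 0 < (c+c')^2 := by nlinarith [sq_nonneg (c-c')]
    have hccss : c*c'+s*s' ≤ 1 := by nlinarith [sq_nonneg (c-c'), sq_nonneg (s-s')]
    have hkey : 0 ≤ c^2+c'^2-2*(c*c')*(c*c'+s*s') := by nlinarith [sq_nonneg (c-c')]
    have hidB : (2*(1-(c*c'+s*s'))*(1-c*c') - (c-c')^2)*(c+c')^2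
        = (s-s')^2*(c^2+c'^2-2*(c*c')*(c*c'+s*s')) := by
      linear_combination ((-1)*c'^2 + (-4)*c*c'*s'^2 + (2)*c*s*c'*s' + (-1)*c^2 + (2)*c^2*c'^2)*pf + ((-1)*c'^2 + (-4)*c*c' + (2)*c*s*c'*s' + (-1)*c^2 + (2)*c^2*c'^2 + (4)*c^3*c')*pg
    by_contra hcon
    push_neg at hcon
    have hneg : (2*(1-(c*c'+s*s'))*(1-c*c') - (c-c')^2)*(c+c')^2 < 0 :=
      mul_neg_of_neg_of_pos (by linarith) hpos
    nlinarith [hneg, hidB, mul_nonneg (sq_nonneg (s-s')) hkey]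

lemma phiFq (c s c' s' : ℝ) (pf : s^2+c^2 = 1) (pg : s'^2+c'^2 = 1) :
    0 ≤ 1-(c*c'+s*s') ∧ 0 ≤ 1-c*c' := by
  constructor
  · nlinarith [sq_nonneg (c-c'), sq_nonneg (s-s')]
  · nlinarith [sq_nonneg (c-c'), sq_nonneg (s+s')]

lemma phiH2u (c s c' s' : ℝ) (pf : s^2+c^2 = 1) (pg : s'^2+c'^2 = 1) :
    2*|s*s'| ≤ s^2+s'^2 := by
  rw [abs_mul]
  nlinarith [sq_nonneg (|s| - |s'|), sq_abs s, sq_abs s']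

lemma phiU1 (c s c' s' : ℝ) (pf : s^2+c^2 = 1) (pg : s'^2+c'^2 = 1) :
    |s*s'| ≤ 1 := by
  have h := phiH2u c s c' s' pf pg
  nlinarith [sq_nonneg c, sq_nonneg c']

lemma phiT2 (c s c' s' : ℝ) (pf : s^2+c^2 = 1) (pg : s'^2+c'^2 = 1) :
    (c+c')^2 ≤ 4*(1-|s*s'|) := by
  have h2u := phiH2u c s c' s' pf pg
  have hu1 := phiU1 c s c' s' pf pg
  have hq2 : |s*s'|^2 = s^2*s'^2 := by rw [abs_mul, mul_pow, sq_abs, sq_abs]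
  have hccsq : (c*c')^2 = (1-s^2)*(1-s'^2) := by
    linear_combination (c'^2)*pf + (1-s^2)*pg
  have hsq : (c*c')^2 ≤ (1-|s*s'|)^2 := by nlinarith [h2u, hq2, hccsq]
  have hcc : c*c' ≤ 1-|s*s'| := by nlinarith [hsq, hu1]
  nlinarith [hcc, h2u, sq_nonneg c, sq_nonneg c']

lemma phiQF (c s c' s' : ℝ) (pf : s^2+c^2 = 1) (pg : s'^2+c'^2 = 1) :
    -(s*s') ≤ (1-(c*c'+s*s'))/2 := by
  nlinarith [sq_nonneg (s+s'), sq_nonneg (c-c')]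

/-- Claim D': the square-root bound. -/
lemma claimD (y c1 F q u s2 P : ℝ)
    (hy0 : 0 ≤ y) (hy1 : y ≤ 1) (hc10 : 0 ≤ c1) (hc11 : c1 ≤ 1)
    (hF0 : 0 ≤ F) (hFq : 0 ≤ F + q)
    (hu : u = |q|) (hs2sq : s2^2 = 1-c1^2) (hE : P^2 ≤ 2*F*(F+q)) :
    Real.sqrt ((c1*F-(1-c1)*q)^2 + s2^2*P^2)
      ≤ (2*F+(1-c1)*(1-y)*u) - y*(c1*F-(1-c1)*q) := by
  set Z := c1*F-(1-c1)*q with hZdef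
  set W := 2*F+(1-c1)*(1-y)*u with hWdef
  have e0 : (0:ℝ) ≤ 1-y := by linarith
  have hG0 : (0:ℝ) ≤ 1-c1 := by linarith
  have h2c : (0:ℝ) ≤ 2-(1+y)*c1 := by nlinarith
  have hmu : s2^2*P^2 ≤ 4*(1-c1)*F*(F+q) := by
    have h1 : s2^2*P^2 ≤ s2^2*(2*F*(F+q)) :=
      mul_le_mul_of_nonneg_left hE (sq_nonneg s2)
    nlinarith [h1, hs2sq, mul_nonneg (mul_nonneg hG0 hF0) hFq]
  have hDfacts : Z^2 + s2^2*P^2 ≤ (W - y*Z)^2 ∧ 0 ≤ W - y*Z := by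
    rcases le_or_gt 0 q with hqn | hqn
    · have he : u = q := by rw [hu, abs_of_nonneg hqn]
      have hprodeq : (W - y*Z)^2 - Z^2
          = (F*(2-(1+y)*c1) + 2*(1-c1)*q)*(F*(2+(1-y)*c1)) := by
        rw [hWdef, hZdef, he]; ring
      have hf1n : 0 ≤ F*(2-(1+y)*c1) + 2*(1-c1)*q := by
        nlinarith [mul_nonneg hF0 h2c, mul_nonneg hG0 hqn]
      have hf2n : 0 ≤ F*(2+(1-y)*c1) :=
        mul_nonneg hF0 (by nlinarith)
      have hlow : 4*(1-c1)*F*(F+q)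
          ≤ (F*(2-(1+y)*c1) + 2*(1-c1)*q)*(F*(2+(1-y)*c1)) := by
        nlinarith [mul_nonneg (mul_nonneg (mul_nonneg hG0 hF0) hFq) (mul_nonneg e0 hc10),
          mul_nonneg (mul_nonneg e0 hc10) (sq_nonneg F),
          sq_nonneg ((1-y)*c1*F),
          mul_nonneg (mul_nonneg (mul_nonneg hG0 hqn) e0) hc10]
      exact ⟨by nlinarith [hprodeq, hlow, hmu], by nlinarith [hf1n, hf2n, hprodeq]⟩
    · have he : u = -q := by rw [hu, abs_of_neg hqn]
      have hq0 : (0:ℝ) ≤ -q := by linarith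
      have hprodeq : (W - y*Z)^2 - Z^2
          = (F*(2-(1+y)*c1) + 2*y*(1-c1)*q)*(F*(2+(1-y)*c1) - 2*(1-y)*(1-c1)*q) := by
        rw [hWdef, hZdef, he]; ring
      have hf1aux : (0:ℝ) ≤ F*c1 - 2*(1-c1)*q := by
        nlinarith [mul_nonneg hF0 hc10, mul_nonneg hG0 hq0]
      have hf1low : 2*(1-c1)*(F+q) ≤ F*(2-(1+y)*c1) + 2*y*(1-c1)*q := by
        nlinarith [mul_nonneg e0 hf1aux]
      have hf1n : (0:ℝ) ≤ 2*(1-c1)*(F+q) := by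
        nlinarith [mul_nonneg hG0 hFq]
      have hf2low : 2*F ≤ F*(2+(1-y)*c1) - 2*(1-y)*(1-c1)*q := by
        nlinarith [mul_nonneg (mul_nonneg e0 hc10) hF0,
          mul_nonneg (mul_nonneg e0 hG0) hq0]
      have hf2n : (0:ℝ) ≤ 2*F := by linarith
      have hlow : 4*(1-c1)*F*(F+q)
          ≤ (F*(2-(1+y)*c1) + 2*y*(1-c1)*q)*(F*(2+(1-y)*c1) - 2*(1-y)*(1-c1)*q) := by
        have hmm : (2*(1-c1)*(F+q))*(2*F)
            ≤ (F*(2-(1+y)*c1) + 2*y*(1-c1)*q)*(F*(2+(1-y)*c1) - 2*(1-y)*(1-c1)*q) :=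
          mul_le_mul hf1low hf2low hf2n (by linarith [hf1low, hf1n])
        nlinarith [hmm]
      exact ⟨by nlinarith [hprodeq, hlow, hmu],
        by nlinarith [hprodeq, hf1low, hf1n, hf2low, hf2n]⟩
  obtain ⟨hDsq, hDpos⟩ := hDfacts
  calc Real.sqrt (Z^2 + s2^2*P^2) ≤ Real.sqrt ((W - y*Z)^2) :=
        Real.sqrt_le_sqrt hDsq
    _ = W - y*Z := Real.sqrt_sq hDpos

/-- Final scalar budget. -/
lemma budget (ε a b y c1 F u lam mid GW : ℝ)
    (hε : 0 < ε) (hε1 : ε ≤ 1)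
    (ha0 : 0 ≤ a) (haε : a ≤ ε) (hb0 : 0 ≤ b) (hbε : b ≤ ε)
    (hy1 : y ≤ 1) (hc11 : c1 ≤ 1)
    (hGb : 1-c1 ≤ b^2/2) (hyb : 1-y ≤ a^2/2)
    (hstrict : (1 - a^2/2)*(1 - b^2/2) < y*c1)
    (hF : 2*F ≤ ε^2)
    (hu0 : 0 ≤ u) (hu1 : u ≤ 1)
    (hl0 : 0 ≤ lam) (hl1 : lam ≤ 1)
    (hmid : mid ≤ (a*b)*(2*lam))
    (hGW : GW ≤ (1-c1)*(1-y)*u) :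
    (2 - 2*y*c1 + mid) + (2*F + GW) < 5*ε^2 := by
  have hab : a*b ≤ ε*ε := mul_le_mul haε hbε hb0 (le_of_lt hε)
  have hab0 : (0:ℝ) ≤ a*b := mul_nonneg ha0 hb0
  have hlab : lam*(a*b) ≤ a*b := by nlinarith
  have e0 : (0:ℝ) ≤ 1-y := by linarith
  have hG0 : (0:ℝ) ≤ 1-c1 := by linarith
  have hGyu : (1-c1)*(1-y)*u ≤ (b^2/2)*(a^2/2) := by
    have hGy : (1-c1)*(1-y) ≤ (b^2/2)*(a^2/2) :=
      mul_le_mul hGb hyb e0 (by positivity)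
    nlinarith [hGy, mul_nonneg hG0 e0]
  have ha2 : a^2 ≤ ε^2 := by nlinarith
  have hb2 : b^2 ≤ ε^2 := by nlinarith
  nlinarith [hstrict, hGyu, hlab, hab, ha2, hb2, hF, hmid,
    mul_nonneg hl0 hab0, hab0]

lemma core (ε da dt c s c' s' : ℝ) (hε : 0 < ε) (hε1 : ε ≤ 1)
    (hdaε : |da| ≤ ε) (hdtε : |dt| ≤ ε)
    (pf : s^2+c^2 = 1) (pg : s'^2+c'^2 = 1)
    (hF2 : 1-(c*c'+s*s') ≤ ε^2/2) :
    (2 - 2*Real.cos da*Real.cos dt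
       + Real.cos da*(Real.cos dt*(1-(c*c'+s*s')) - (1-Real.cos dt)*(s*s'))
       - Real.sin da*Real.sin dt*(c+c'))
     + Real.sqrt ((Real.cos dt*(1-(c*c'+s*s')) - (1-Real.cos dt)*(s*s'))^2
         + Real.sin dt^2*(c-c')^2) < 5*ε^2 := by
  have hda2 : da^2 ≤ ε^2 := by nlinarith [sq_abs da, abs_nonneg da]
  have hdt2 : dt^2 ≤ ε^2 := by nlinarith [sq_abs dt, abs_nonneg dt]
  have hε2 : ε^2 ≤ 1 := by nlinarith
  have hy1 : Real.cos da ≤ 1 := Real.cos_le_one da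
  have hc11 : Real.cos dt ≤ 1 := Real.cos_le_one dt
  have hyl : 1 - da^2/2 ≤ Real.cos da := Real.one_sub_sq_div_two_le_cos
  have hc1l : 1 - dt^2/2 ≤ Real.cos dt := Real.one_sub_sq_div_two_le_cos
  have hs1a : |Real.sin da| ≤ |da| := Real.abs_sin_le_abs
  have hs2a : |Real.sin dt| ≤ |dt| := Real.abs_sin_le_abs
  have hs2c1 : (Real.sin dt)^2 + (Real.cos dt)^2 = 1 := Real.sin_sq_add_cos_sq dt
  obtain ⟨hF0, hFcc⟩ := phiFq c s c' s' pf pg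
  by_cases hzz : da = 0 ∧ dt = 0
  · obtain ⟨h1, h2⟩ := hzz
    subst h1; subst h2
    simp only [Real.cos_zero, Real.sin_zero]
    have hs : Real.sqrt ((1*(1-(c*c'+s*s')) - (1-1)*(s*s'))^2 + (0:ℝ)^2*(c-c')^2)
        = 1-(c*c'+s*s') := by
      rw [show (1*(1-(c*c'+s*s')) - (1-1)*(s*s'))^2 + (0:ℝ)^2*(c-c')^2
        = (1-(c*c'+s*s'))^2 by ring]
      exact Real.sqrt_sq hF0
    rw [hs]
    nlinarith [mul_pos hε hε]
  · have hstrict : (1 - da^2/2)*(1 - dt^2/2) < Real.cos da * Real.cos dt := by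
      have hy0 : (0:ℝ) < Real.cos da := by nlinarith
      have hc10 : (0:ℝ) < Real.cos dt := by nlinarith
      have hha : (0:ℝ) < 1 - da^2/2 := by nlinarith
      have hhb : (0:ℝ) < 1 - dt^2/2 := by nlinarith
      rcases not_and_or.1 hzz with hne | hne
      · have hstr : 1 - da^2/2 < Real.cos da := Real.one_sub_sq_div_two_lt_cos hne
        calc (1 - da^2/2)*(1 - dt^2/2) ≤ (1 - da^2/2)*Real.cos dt :=
              mul_le_mul_of_nonneg_left hc1l (le_of_lt hha)
          _ < Real.cos da * Real.cos dt := mul_lt_mul_of_pos_right hstr hc10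
      · have hstr : 1 - dt^2/2 < Real.cos dt := Real.one_sub_sq_div_two_lt_cos hne
        calc (1 - da^2/2)*(1 - dt^2/2) ≤ Real.cos da*(1 - dt^2/2) :=
              mul_le_mul_of_nonneg_right hyl (le_of_lt hhb)
          _ < Real.cos da * Real.cos dt := mul_lt_mul_of_pos_left hstr hy0
    have hy0 : (0:ℝ) ≤ Real.cos da := by nlinarith
    have hc10 : (0:ℝ) ≤ Real.cos dt := by nlinarith
    have hE : (c-c')^2 ≤ 2*(1-(c*c'+s*s'))*((1-(c*c'+s*s'))+(s*s')) := by
      have h := claimE c s c' s' pf pg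
      nlinarith [h]
    have hFq : (0:ℝ) ≤ (1-(c*c'+s*s')) + s*s' := by nlinarith [hFcc]
    have hs2sq : (Real.sin dt)^2 = 1 - (Real.cos dt)^2 := by linarith [hs2c1]
    have hT := claimD (Real.cos da) (Real.cos dt) (1-(c*c'+s*s')) (s*s') (|s*s'|)
      (Real.sin dt) (c-c') hy0 hy1 hc10 hc11 hF0 hFq rfl hs2sq hE
    -- middle term bound
    have hu1 := phiU1 c s c' s' pf pg
    have hl2 : (0:ℝ) ≤ 1 - |s*s'| := by linarith
    have hl0 : (0:ℝ) ≤ Real.sqrt (1-|s*s'|) := Real.sqrt_nonneg _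
    have hl1 : Real.sqrt (1-|s*s'|) ≤ 1 := Real.sqrt_le_one.mpr (by linarith [abs_nonneg (s*s')])
    have hlsq : (Real.sqrt (1-|s*s'|))^2 = 1-|s*s'| := Real.sq_sqrt hl2
    have hcl : |c+c'| ≤ 2*Real.sqrt (1-|s*s'|) := by
      have ht2 := phiT2 c s c' s' pf pg
      have h4 : (c+c')^2 ≤ (2*Real.sqrt (1-|s*s'|))^2 := by nlinarith [hlsq, ht2]
      calc |c+c'| = Real.sqrt ((c+c')^2) := (Real.sqrt_sq_eq_abs _).symm
        _ ≤ Real.sqrt ((2*Real.sqrt (1-|s*s'|))^2) := Real.sqrt_le_sqrt h4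
        _ = 2*Real.sqrt (1-|s*s'|) := Real.sqrt_sq (by linarith)
    have hmid : -(Real.sin da*Real.sin dt*(c+c')) ≤ (|da| * |dt|)*(2*Real.sqrt (1-|s*s'|)) := by
      have h1 : -(Real.sin da*Real.sin dt*(c+c')) ≤ |Real.sin da*Real.sin dt*(c+c')| :=
        neg_le_abs _
      have h2 : |Real.sin da*Real.sin dt*(c+c')| = |Real.sin da| * |Real.sin dt| * |c+c'| := by
        rw [abs_mul, abs_mul]
      have m1 : |Real.sin da| * |Real.sin dt| ≤ |da| * |dt| :=
        mul_le_mul hs1a hs2a (abs_nonneg _) (abs_nonneg _)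
      have m2 : |Real.sin da| * |Real.sin dt| * |c+c'| ≤ (|da| * |dt|)*(2*Real.sqrt (1-|s*s'|)) :=
        mul_le_mul m1 hcl (abs_nonneg _) (by positivity)
      linarith [h1, h2 ▸ m2]
    -- budget
    have hstrict' : (1 - |da|^2/2)*(1 - |dt|^2/2) < Real.cos da * Real.cos dt := by
      rw [sq_abs, sq_abs]; exact hstrict
    have hGb : 1 - Real.cos dt ≤ |dt|^2/2 := by rw [sq_abs]; linarith
    have hyb : 1 - Real.cos da ≤ |da|^2/2 := by rw [sq_abs]; linarith
    have hbud := budget ε (|da|) (|dt|) (Real.cos da) (Real.cos dt)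
      (1-(c*c'+s*s')) (|s*s'|) (Real.sqrt (1-|s*s'|))
      (-(Real.sin da*Real.sin dt*(c+c')))
      ((1-Real.cos dt)*(1-Real.cos da)*|s*s'|)
      hε hε1 (abs_nonneg da) hdaε (abs_nonneg dt) hdtε hy1 hc11 hGb hyb hstrict'
      (by linarith) (abs_nonneg _) hu1 hl0 hl1 hmid (le_refl _)
    linarith [hT, hbud]

lemma trivbound (ca sa cb sb ct st cu su c s c' s' x z : ℝ)
    (pa : sa^2+ca^2 = 1) (pb : sb^2+cb^2 = 1) (pt : st^2+ct^2 = 1)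
    (pu : su^2+cu^2 = 1) (pf : s^2+c^2 = 1) (pg : s'^2+c'^2 = 1) :
    (((ca*(-st) - sa*(-(ct*c))) - (cb*(-su) - sb*(-(cu*c'))))*x + ((sa*(-st) + ca*(-(ct*c))) - (sb*(-su) + cb*(-(cu*c'))))*z)^2 + (((ca*ct - sa*(-(st*c))) - (cb*cu - sb*(-(su*c'))))*x + ((sa*ct + ca*(-(st*c))) - (sb*cu + cb*(-(su*c'))))*z)^2 + (((ca*0 - sa*s) - (cb*0 - sb*s'))*x + ((sa*0 + ca*s) - (sb*0 + cb*s'))*z)^2 ≤ 2^2*(x^2+z^2) := by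
  have r1 := rowsum ca sa ct st c s x z pa pt pf
  have r2 := rowsum cb sb cu su c' s' x z pb pu pg
  nlinarith [r1, r2, sq_nonneg (((ca*(-st) - sa*(-(ct*c)))*x + (sa*(-st) + ca*(-(ct*c)))*z) + ((cb*(-su) - sb*(-(cu*c')))*x + (sb*(-su) + cb*(-(cu*c')))*z)),
    sq_nonneg (((ca*ct - sa*(-(st*c)))*x + (sa*ct + ca*(-(st*c)))*z) + ((cb*cu - sb*(-(su*c')))*x + (sb*cu + cb*(-(su*c')))*z)), sq_nonneg (((ca*0 - sa*s)*x + (sa*0 + ca*s)*z) + ((cb*0 - sb*s')*x + (sb*0 + cb*s')*z))]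

/-- The √5-continuity bound for a rotated projection matrix. -/
theorem norm_R_mul_M_sub_R_mul_M_lt (ε θ θ' φ φ' α α' : ℝ) (hε : 0 < ε)
    (hθ : |θ - θ'| ≤ ε) (hφ : |φ - φ'| ≤ ε) (hα : |α - α'| ≤ ε) :
    opNorm (R α * M θ φ - R α' * M θ' φ') < Real.sqrt 5 * ε := by
  have hA00 : (R α * M θ φ - R α' * M θ' φ') 0 0 = ((Real.cos α*(-Real.sin θ) - Real.sin α*(-(Real.cos θ*Real.cos φ))) - (Real.cos α'*(-Real.sin θ') - Real.sin α'*(-(Real.cos θ'*Real.cos φ')))) := by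
    simp [R, M, Matrix.sub_apply, Matrix.mul_apply, Fin.sum_univ_two]
  have hA01 : (R α * M θ φ - R α' * M θ' φ') 0 1 = ((Real.cos α*Real.cos θ - Real.sin α*(-(Real.sin θ*Real.cos φ))) - (Real.cos α'*Real.cos θ' - Real.sin α'*(-(Real.sin θ'*Real.cos φ')))) := by
    simp [R, M, Matrix.sub_apply, Matrix.mul_apply, Fin.sum_univ_two]
  have hA02 : (R α * M θ φ - R α' * M θ' φ') 0 2 = ((Real.cos α*0 - Real.sin α*Real.sin φ) - (Real.cos α'*0 - Real.sin α'*Real.sin φ')) := by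
    simp [R, M, Matrix.sub_apply, Matrix.mul_apply, Fin.sum_univ_two]
  have hA10 : (R α * M θ φ - R α' * M θ' φ') 1 0 = ((Real.sin α*(-Real.sin θ) + Real.cos α*(-(Real.cos θ*Real.cos φ))) - (Real.sin α'*(-Real.sin θ') + Real.cos α'*(-(Real.cos θ'*Real.cos φ')))) := by
    simp [R, M, Matrix.sub_apply, Matrix.mul_apply, Fin.sum_univ_two]
  have hA11 : (R α * M θ φ - R α' * M θ' φ') 1 1 = ((Real.sin α*Real.cos θ + Real.cos α*(-(Real.sin θ*Real.cos φ))) - (Real.sin α'*Real.cos θ' + Real.cos α'*(-(Real.sin θ'*Real.cos φ')))) := by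
    simp [R, M, Matrix.sub_apply, Matrix.mul_apply, Fin.sum_univ_two]
  have hA12 : (R α * M θ φ - R α' * M θ' φ') 1 2 = ((Real.sin α*0 + Real.cos α*Real.sin φ) - (Real.sin α'*0 + Real.cos α'*Real.sin φ')) := by
    simp [R, M, Matrix.sub_apply, Matrix.mul_apply, Fin.sum_univ_two]
  have h5 : (2:ℝ) < Real.sqrt 5 := by
    nlinarith [Real.sq_sqrt (by norm_num : (0:ℝ) ≤ 5), Real.sqrt_nonneg 5]
  by_cases hbig : 1 ≤ ε
  · have hop : opNorm (R α * M θ φ - R α' * M θ' φ') ≤ 2 := by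
      apply opNorm_le_of_quad _ (by norm_num)
      intro x z
      rw [hA00, hA01, hA02, hA10, hA11, hA12]
      exact trivbound (Real.cos α) (Real.sin α) (Real.cos α') (Real.sin α')
        (Real.cos θ) (Real.sin θ) (Real.cos θ') (Real.sin θ')
        (Real.cos φ) (Real.sin φ) (Real.cos φ') (Real.sin φ') x z
        (Real.sin_sq_add_cos_sq α) (Real.sin_sq_add_cos_sq α')
        (Real.sin_sq_add_cos_sq θ) (Real.sin_sq_add_cos_sq θ')
        (Real.sin_sq_add_cos_sq φ) (Real.sin_sq_add_cos_sq φ')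
    have : Real.sqrt 5 * 1 ≤ Real.sqrt 5 * ε :=
      mul_le_mul_of_nonneg_left hbig (Real.sqrt_nonneg 5)
    linarith
  · push_neg at hbig
    set B := (2 - 2*Real.cos (α-α')*Real.cos (θ-θ') + Real.cos (α-α')*(Real.cos (θ-θ')*(1-(Real.cos φ*Real.cos φ'+Real.sin φ*Real.sin φ')) - (1-Real.cos (θ-θ'))*(Real.sin φ*Real.sin φ')) - Real.sin (α-α')*Real.sin (θ-θ')*(Real.cos φ+Real.cos φ')) with hBdef
    set T := Real.sqrt ((Real.cos (θ-θ')*(1-(Real.cos φ*Real.cos φ'+Real.sin φ*Real.sin φ')) - (1-Real.cos (θ-θ'))*(Real.sin φ*Real.sin φ'))^2 + Real.sin (θ-θ')^2*(Real.cos φ-Real.cos φ')^2) with hTdef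
    have hquad : ∀ x z : ℝ,
        ((R α * M θ φ - R α' * M θ' φ') 0 0*x + (R α * M θ φ - R α' * M θ' φ') 1 0*z)^2
        + ((R α * M θ φ - R α' * M θ' φ') 0 1*x + (R α * M θ φ - R α' * M θ' φ') 1 1*z)^2
        + ((R α * M θ φ - R α' * M θ' φ') 0 2*x + (R α * M θ φ - R α' * M θ' φ') 1 2*z)^2
        ≤ (B + T)*(x^2+z^2) := by
      intro x z
      rw [hA00, hA01, hA02, hA10, hA11, hA12]
      have kid := keyid (Real.cos α) (Real.sin α) (Real.cos α') (Real.sin α')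
        (Real.cos θ) (Real.sin θ) (Real.cos θ') (Real.sin θ')
        (Real.cos φ) (Real.sin φ) (Real.cos φ') (Real.sin φ') x z
        (Real.sin_sq_add_cos_sq α) (Real.sin_sq_add_cos_sq α')
        (Real.sin_sq_add_cos_sq θ) (Real.sin_sq_add_cos_sq θ')
        (Real.sin_sq_add_cos_sq φ) (Real.sin_sq_add_cos_sq φ')
      rw [← Real.cos_sub α α', ← Real.sin_sub α α', ← Real.cos_sub θ θ',
        ← Real.sin_sub θ θ', ← Real.cos_add α α', ← Real.sin_add α α'] at kid
      rw [kid, hBdef, hTdef]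
      exact quadbound (Real.cos (α-α')) (Real.sin (α-α')) (Real.cos (θ-θ'))
        (Real.sin (θ-θ')) (Real.cos (α+α')) (Real.sin (α+α'))
        (Real.cos φ) (Real.sin φ) (Real.cos φ') (Real.sin φ')
        (Real.sin_sq_add_cos_sq (α+α')) x z
    have hBT0 : 0 ≤ B + T := by
      have h := hquad 1 0
      nlinarith [h,
        sq_nonneg ((R α * M θ φ - R α' * M θ' φ') 0 0*1 + (R α * M θ φ - R α' * M θ' φ') 1 0*0),
        sq_nonneg ((R α * M θ φ - R α' * M θ' φ') 0 1*1 + (R α * M θ φ - R α' * M θ' φ') 1 1*0),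
        sq_nonneg ((R α * M θ φ - R α' * M θ' φ') 0 2*1 + (R α * M θ φ - R α' * M θ' φ') 1 2*0)]
    have hF2 : 1-(Real.cos φ*Real.cos φ'+Real.sin φ*Real.sin φ') ≤ ε^2/2 := by
      have h1 : 1 - (φ-φ')^2/2 ≤ Real.cos (φ-φ') := Real.one_sub_sq_div_two_le_cos
      have h2 : (φ-φ')^2 ≤ ε^2 := by nlinarith [sq_abs (φ-φ'), abs_nonneg (φ-φ')]
      rw [← Real.cos_sub φ φ']
      linarith
    have hcore : B + T < 5*ε^2 := by
      rw [hBdef, hTdef]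
      exact core ε (α-α') (θ-θ') (Real.cos φ) (Real.sin φ) (Real.cos φ') (Real.sin φ')
        hε (le_of_lt hbig) hα hθ (Real.sin_sq_add_cos_sq φ) (Real.sin_sq_add_cos_sq φ') hF2
    have hop : opNorm (R α * M θ φ - R α' * M θ' φ') ≤ Real.sqrt (B+T) := by
      apply opNorm_le_of_quad _ (Real.sqrt_nonneg _)
      intro x z
      rw [Real.sq_sqrt hBT0]
      exact hquad x z
    have hlt : Real.sqrt (B+T) < Real.sqrt (5*ε^2) := Real.sqrt_lt_sqrt hBT0 hcore
    have heq : Real.sqrt (5*ε^2) = Real.sqrt 5 * ε := by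
      rw [Real.sqrt_mul (by norm_num : (0:ℝ) ≤ 5), Real.sqrt_sq (le_of_lt hε)]
    linarith
end
end

section
/- Let V1, V2, V3, Y, Z ∈ ℝ³ with ‖Y‖ = ‖Z‖ and Y, Z ∈ span⁺(V1,V2,V3). Then at least one of the three inequalities ⟨V1,Y⟩ > ⟨V1,Z⟩, ⟨V2,Y⟩ > ⟨V2,Z⟩, ⟨V3,Y⟩ > ⟨V3,Z⟩ fails. -/
open scoped RealInnerProductSpace

/-- The simplicial cone spanned by three vectors with strictly positive coefficients. -/
def spanPos (v1 v2 v3 : EuclideanSpace ℝ (Fin 3)) : Set (EuclideanSpace ℝ (Fin 3)) :=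
  {w | ∃ l1 l2 l3 : ℝ, 0 < l1 ∧ 0 < l2 ∧ 0 < l3 ∧ w = l1 • v1 + l2 • v2 + l3 • v3}

/-- Two vectors of equal norm in the positive span of `V1, V2, V3` cannot satisfy all
three strict inequalities `⟨Vi, Y⟩ > ⟨Vi, Z⟩` simultaneously. -/
theorem not_all_inner_gt (V1 V2 V3 Y Z : EuclideanSpace ℝ (Fin 3))
    (hYZ : ‖Y‖ = ‖Z‖) (hY : Y ∈ spanPos V1 V2 V3) (hZ : Z ∈ spanPos V1 V2 V3) :
    ¬ (⟪V1, Y⟫ > ⟪V1, Z⟫ ∧ ⟪V2, Y⟫ > ⟪V2, Z⟫ ∧ ⟪V3, Y⟫ > ⟪V3, Z⟫) := by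
  rintro ⟨h1, h2, h3⟩
  obtain ⟨l1, l2, l3, hl1, hl2, hl3, hzeq⟩ := hZ
  have key : ⟪Z, Z⟫ < ⟪Z, Y⟫ := by
    have e1 : ⟪Z, Y⟫ = l1 * ⟪V1, Y⟫ + l2 * ⟪V2, Y⟫ + l3 * ⟪V3, Y⟫ := by
      rw [hzeq]; simp only [inner_add_left, real_inner_smul_left]
    have e2 : ⟪Z, Z⟫ = l1 * ⟪V1, Z⟫ + l2 * ⟪V2, Z⟫ + l3 * ⟪V3, Z⟫ := by
      conv_lhs => rw [hzeq]
      simp only [inner_add_left, real_inner_smul_left]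
      rw [← hzeq]
    rw [e1, e2]
    have := mul_lt_mul_of_pos_left h1 hl1
    have := mul_lt_mul_of_pos_left h2 hl2
    have := mul_lt_mul_of_pos_left h3 hl3
    linarith
  have hc : ⟪Z, Y⟫ ≤ ‖Z‖ * ‖Y‖ := real_inner_le_norm Z Y
  have hzz : ⟪Z, Z⟫ = ‖Z‖ * ‖Z‖ := real_inner_self_eq_norm_mul_norm Z
  rw [hYZ] at hc
  linarith
end

section
/- Let 𝒫 ⊂ ℝ² be a finite set of points not all on one line, and let Q ∈ 𝒫 be a vertex of 𝒫 (an extreme point of its convex hull). Let Q̄ ∈ ℝ² and δ > 0 with ‖Q − Q̄‖ < δ. Assume there exists r > 0 with ‖Q‖ > r such that for every other vertex P_j ∈ 𝒫 \ {Q} one has ⟨Q, Q − P_j⟩ / (‖Q‖·‖Q − P_j‖) ≥ δ/r. Then for every point A in Circ_δ(Q̄) ∩ 𝒫° it holds that ‖Q‖ > ‖A‖, i.e. Q is δ-locally maximally distant with respect to Q̄. -/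
open scoped RealInnerProductSpace

/-!
Every point `P` of the convex hull satisfies the cone condition
`(δ / r) ‖Q‖ ‖Q - P‖ ≤ ⟪Q, Q - P⟫`: it holds at the vertices by hypothesis and the set where
it holds is convex. For `A` in the disk and in the interior of the hull we have `A ≠ Q`
(a vertex is not interior) and `‖Q - A‖ < 2δ`, so `‖Q - A‖² < 2δ‖Q - A‖ < 2⟪Q, Q - A⟫`,
which expands to `‖A‖² < ‖Q‖²`.
-/

section InnerProductSpace

variable {E : Type*} [NormedAddCommGroup E] [InnerProductSpace ℝ E]

theorem convex_setOf_mul_norm_sub_le_inner_sub {c : ℝ} (hc : 0 ≤ c) (v a : E) :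
    Convex ℝ {x : E | c * ‖a - x‖ ≤ ⟪v, a - x⟫} := by
  intro x hx y hy s t hs ht hst
  have hsplit : a - (s • x + t • y) = s • (a - x) + t • (a - y) := by
    rw [smul_sub, smul_sub, sub_add_sub_comm, ← add_smul, hst, one_smul]
  simp only [Set.mem_ofPred_eq, hsplit, inner_add_right, real_inner_smul_right] at hx hy ⊢
  calc c * ‖s • (a - x) + t • (a - y)‖
      ≤ c * (s * ‖a - x‖ + t * ‖a - y‖) := by
        gcongr
        refine (norm_add_le _ _).trans_eq ?_
        rw [norm_smul_of_nonneg hs, norm_smul_of_nonneg ht]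
    _ = s * (c * ‖a - x‖) + t * (c * ‖a - y‖) := by ring
    _ ≤ s * ⟪v, a - x⟫ + t * ⟪v, a - y⟫ := by gcongr

theorem norm_lt_norm_of_sq_norm_sub_lt_two_mul_inner {a b : E}
    (h : ‖a - b‖ ^ 2 < 2 * ⟪a, a - b⟫) : ‖b‖ < ‖a‖ := by
  have hexpand : ‖b‖ ^ 2 = ‖a‖ ^ 2 - 2 * ⟪a, a - b⟫ + ‖a - b‖ ^ 2 := by
    rw [← norm_sub_sq_real, sub_sub_cancel]
  exact lt_of_pow_lt_pow_left₀ 2 (norm_nonneg a) (by linarith)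

end InnerProductSpace

theorem Set.Finite.convexHull_extremePoints_convexHull {E : Type*} [AddCommGroup E] [Module ℝ E]
    [TopologicalSpace E] [T2Space E] [IsTopologicalAddGroup E] [ContinuousSMul ℝ E]
    [LocallyConvexSpace ℝ E] {s : Set E} (hs : s.Finite) :
    convexHull ℝ ((convexHull ℝ s).extremePoints ℝ) = convexHull ℝ s := by
  have hext : ((convexHull ℝ s).extremePoints ℝ).Finite :=
    hs.subset extremePoints_convexHull_subset
  rw [← (hext.isClosed_convexHull ℝ).closure_eq]
  exact closure_convexHull_extremePoints (hs.isCompact_convexHull ℝ) (convex_convexHull ℝ s)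

theorem delta_LMD_of_acute_general
    (V : Finset (EuclideanSpace ℝ (Fin 2)))
    (Q : EuclideanSpace ℝ (Fin 2))
    (hQvert : Q ∈ (convexHull ℝ (V : Set (EuclideanSpace ℝ (Fin 2)))).extremePoints ℝ)
    (Q' : EuclideanSpace ℝ (Fin 2)) (δ : ℝ) (hQQ' : ‖Q - Q'‖ < δ)
    (r : ℝ) (hr : 0 < r) (hQr : ‖Q‖ > r)
    (hacute : ∀ Pj ∈ V,
      Pj ∈ (convexHull ℝ (V : Set (EuclideanSpace ℝ (Fin 2)))).extremePoints ℝ →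
      Pj ≠ Q → ⟪Q, Q - Pj⟫ / (‖Q‖ * ‖Q - Pj‖) ≥ δ / r) :
    ∀ A ∈ Metric.ball Q' δ ∩
      interior (convexHull ℝ (V : Set (EuclideanSpace ℝ (Fin 2)))), ‖Q‖ > ‖A‖ := by
  rintro A ⟨hAball, hAint⟩
  have hδ : 0 ≤ δ := (norm_nonneg _).trans hQQ'.le
  have hAQ : 0 < ‖Q - A‖ := norm_pos_iff.2 <| sub_ne_zero.2 fun h =>
    Set.disjoint_left.1 (disjoint_interior_extremePoints _) hAint (h ▸ hQvert)
  have hAδ : ‖Q - A‖ < 2 * δ := by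
    have := norm_sub_le_norm_sub_add_norm_sub Q Q' A
    rw [← dist_eq_norm Q', dist_comm] at this
    linarith [Metric.mem_ball.1 hAball]
  have hAhull :
      A ∈ convexHull ℝ ((convexHull ℝ (V : Set (EuclideanSpace ℝ (Fin 2)))).extremePoints ℝ) := by
    rw [V.finite_toSet.convexHull_extremePoints_convexHull]
    exact interior_subset hAint
  have hcone : A ∈ {P | δ / r * ‖Q‖ * ‖Q - P‖ ≤ ⟪Q, Q - P⟫} := by
    refine convexHull_min (fun P hP => ?_)
      (convex_setOf_mul_norm_sub_le_inner_sub (by positivity) Q Q) hAhull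
    rcases eq_or_ne P Q with rfl | hPQ
    · simp
    · have := hacute P (extremePoints_convexHull_subset hP) hP hPQ
      have hQpos : 0 < ‖Q‖ := hr.trans hQr
      have hPpos : 0 < ‖Q - P‖ := norm_pos_iff.2 (sub_ne_zero.2 hPQ.symm)
      rw [ge_iff_le, le_div_iff₀ (by positivity)] at this
      simpa [mul_assoc] using this
  refine norm_lt_norm_of_sq_norm_sub_lt_two_mul_inner ?_
  have hratio : δ ≤ δ / r * ‖Q‖ := by
    rw [div_mul_eq_mul_div, le_div_iff₀ hr]; gcongr
  calc ‖Q - A‖ ^ 2 < 2 * δ * ‖Q - A‖ := by nlinarith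
    _ ≤ 2 * (δ / r * ‖Q‖ * ‖Q - A‖) := by nlinarith
    _ ≤ 2 * ⟪Q, Q - A⟫ := by linarith [hcone.out]

/-- A sufficient criterion for a vertex `Q` of a polygon to be δ-locally maximally
distant with respect to `Q'`: all points `A` of the open disk of radius δ around `Q'`
which lie in the interior of the convex hull satisfy `‖A‖ < ‖Q‖`. -/
theorem delta_LMD_of_acute
    (V : Finset (EuclideanSpace ℝ (Fin 2)))
    (hline : ¬ Collinear ℝ (V : Set (EuclideanSpace ℝ (Fin 2))))
    (Q : EuclideanSpace ℝ (Fin 2)) (hQV : Q ∈ V)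
    (hQvert : Q ∈ (convexHull ℝ (V : Set (EuclideanSpace ℝ (Fin 2)))).extremePoints ℝ)
    (Q' : EuclideanSpace ℝ (Fin 2)) (δ : ℝ) (hδ : 0 < δ) (hQQ' : ‖Q - Q'‖ < δ)
    (r : ℝ) (hr : 0 < r) (hQr : ‖Q‖ > r)
    (hacute : ∀ Pj ∈ V,
      Pj ∈ (convexHull ℝ (V : Set (EuclideanSpace ℝ (Fin 2)))).extremePoints ℝ →
      Pj ≠ Q → ⟪Q, Q - Pj⟫ / (‖Q‖ * ‖Q - Pj‖) ≥ δ / r) :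
    ∀ A ∈ Metric.ball Q' δ ∩
      interior (convexHull ℝ (V : Set (EuclideanSpace ℝ (Fin 2)))), ‖Q‖ > ‖A‖ :=
  delta_LMD_of_acute_general V Q hQvert Q' δ hQQ' r hr hQr hacute
end
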